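/- arXiv:2205.10017 — 3 statements merged into one kernel-verified Lean document; each statement's English description precedes it below -/
import Mathlib

section
/- Under the assumptions of the previous statement, and additionally assuming γV - m ≤ 0 and C(1) ≥ 0, the function g restricted to [0,1] is Lipschitz continuous with Lipschitz constant r + C(1) - (γV - m). -/
theorem stmt_5 (C : ℝ → ℝ) (hCmono : MonotoneOn C (Set.Icc 0 1)) (hC0 : C 0 = 0)
    (hC1 : 0 ≤ C 1)
    (r : ℝ) (hr : 0 < r) (V m γ : ℝ) (hm : 0 ≤ m) (hγ : γ ∈ Set.Ico (0:ℝ) 1)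
    (hVm : γ * V - m ≤ 0)
    (g : ℝ → ℝ)
    (hg : ∀ π : ℝ, g π =
      - (if π < 0 then (1 - π) * r - π * C 1
         else if 1 < π then 0
         else ⨆ a : Set.Icc (0:ℝ) 1, ((1 - π) * r * (a : ℝ) - π * C a))
      + π * (γ * V - m)) :
    ∀ x ∈ Set.Icc (0:ℝ) 1, ∀ y ∈ Set.Icc (0:ℝ) 1,
      |g x - g y| ≤ (r + C 1 - (γ * V - m)) * |x - y| := by
  haveI : Nonempty (Set.Icc (0:ℝ) 1) := ⟨⟨0, by norm_num⟩⟩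
  set f : ℝ → ℝ := fun π => ⨆ a : Set.Icc (0:ℝ) 1, ((1 - π) * r * (a : ℝ) - π * C a)
    with hf
  have hCbnd : ∀ a : Set.Icc (0:ℝ) 1, 0 ≤ C a ∧ C a ≤ C 1 := by
    intro a
    constructor
    · have h := hCmono (by constructor <;> norm_num) a.2 a.2.1
      linarith
    · exact hCmono a.2 (by constructor <;> norm_num) a.2.2
  have hbdd : ∀ π : ℝ, π ∈ Set.Icc (0:ℝ) 1 →
      BddAbove (Set.range fun a : Set.Icc (0:ℝ) 1 => ((1 - π) * r * (a : ℝ) - π * C a)) := by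
    intro π hπ
    refine ⟨r, ?_⟩
    rintro _ ⟨a, rfl⟩
    have h1 := (hCbnd a).1
    have ha := a.2
    simp only [Set.mem_Icc] at ha hπ
    obtain ⟨ha1, ha2⟩ := ha
    obtain ⟨hπ1, hπ2⟩ := hπ
    show (1 - π) * r * (a:ℝ) - π * C a ≤ r
    nlinarith [mul_nonneg hπ1 h1,
      mul_nonneg (mul_nonneg (by linarith : (0:ℝ) ≤ 1 - π) hr.le) (by linarith : (0:ℝ) ≤ 1 - (a:ℝ)),
      mul_nonneg hπ1 hr.le]
  have key : ∀ x ∈ Set.Icc (0:ℝ) 1, ∀ y ∈ Set.Icc (0:ℝ) 1,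
      f x ≤ f y + (r + C 1) * |x - y| := by
    intro x hx y hy
    apply ciSup_le
    intro a
    have hle : ((1 - y) * r * (a : ℝ) - y * C a) ≤ f y := le_ciSup (hbdd y hy) a
    have habs : ((1 - x) * r * (a : ℝ) - x * C a) - ((1 - y) * r * (a : ℝ) - y * C a)
        ≤ (r + C 1) * |x - y| := by
      have : ((1 - x) * r * (a : ℝ) - x * C a) - ((1 - y) * r * (a : ℝ) - y * C a)
          = (y - x) * (r * (a : ℝ) + C a) := by ring
      rw [this]
      have h1 := (hCbnd a).1
      have h2 := (hCbnd a).2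
      have ha1 := a.2.1
      have ha2 := a.2.2
      have hxy : y - x ≤ |x - y| := by
        rw [abs_sub_comm]; exact le_abs_self _
      have hxy2 : -(y - x) ≤ |x - y| := by
        rw [abs_sub_comm]; exact neg_le_abs _
      have hsum : 0 ≤ r * (a : ℝ) + C a := by nlinarith
      have hsum2 : r * (a : ℝ) + C a ≤ r + C 1 := by nlinarith
      calc (y - x) * (r * (a : ℝ) + C a) ≤ |x - y| * (r * (a : ℝ) + C a) := by
            nlinarith [abs_nonneg (x - y)]
        _ ≤ |x - y| * (r + C 1) := by nlinarith [abs_nonneg (x - y)]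
        _ = (r + C 1) * |x - y| := by ring
    linarith
  intro x hx y hy
  have hgx : g x = - f x + x * (γ * V - m) := by
    rw [hg x, if_neg (not_lt.mpr hx.1), if_neg (not_lt.mpr hx.2)]
  have hgy : g y = - f y + y * (γ * V - m) := by
    rw [hg y, if_neg (not_lt.mpr hy.1), if_neg (not_lt.mpr hy.2)]
  have k1 := key x hx y hy
  have k2 := key y hy x hx
  rw [abs_sub_comm y x] at k2
  have hmm : (x - y) * (γ * V - m) ≤ (-(γ * V - m)) * |x - y| ∧
      (y - x) * (γ * V - m) ≤ (-(γ * V - m)) * |x - y| := by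
    constructor
    · have : -(x - y) ≤ |x - y| := neg_le_abs _
      nlinarith
    · have : -(y - x) ≤ |x - y| := by rw [abs_sub_comm]; exact neg_le_abs _
      nlinarith
  rw [abs_le]
  constructor
  · rw [hgx, hgy]
    nlinarith [hmm.2]
  · rw [hgx, hgy]
    nlinarith [hmm.1]
end

section
/- With G as above, the minimizing set satisfies: a* ∈ [0,1]^n attains min_a Σ_b π_b ( C(a_b) - Σ_{i≠b} r_i a_i - m_b + γ V_b ) if and only if for every b, a*_b ∈ argmax_{a ∈ [0,1]} { (1 - π_b) r_b a - π_b C(a) }. In particular the smugglers' best response does not depend on the state values V_b, the movement costs m_b, or the discount factor γ. -/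
theorem stmt_7 (n : ℕ) (hn : 1 ≤ n)
    (r : Fin n → ℝ) (hr : ∀ b, 0 < r b)
    (C : ℝ → ℝ) (hCmono : MonotoneOn C (Set.Icc 0 1)) (hC0 : C 0 = 0)
    (m : Fin n → ℝ) (hm : ∀ b, 0 ≤ m b) (V : Fin n → ℝ)
    (γ : ℝ) (hγ : γ ∈ Set.Ico (0:ℝ) 1)
    (π : Fin n → ℝ) (hπ : π ∈ stdSimplex ℝ (Fin n))
    (a' : Fin n → ℝ) (ha' : ∀ b, a' b ∈ Set.Icc (0:ℝ) 1) :
    IsMinOn (fun a : Fin n → ℝ => ∑ b, π b *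
        (C (a b) - (∑ i ∈ Finset.univ.erase b, r i * a i) - m b + γ * V b))
        {a | ∀ b, a b ∈ Set.Icc (0:ℝ) 1} a' ↔
    ∀ b, IsMaxOn (fun a : ℝ => (1 - π b) * r b * a - π b * C a)
        (Set.Icc 0 1) (a' b) := by
  classical
  set g : Fin n → ℝ → ℝ := fun b x => π b * C x - (1 - π b) * r b * x with hg
  have hsum1 : ∑ b, π b = 1 := hπ.2
  -- Key separability identity
  have key : ∀ a : Fin n → ℝ,
      (∑ b, π b * (C (a b) - (∑ i ∈ Finset.univ.erase b, r i * a i) - m b + γ * V b))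
      = (∑ b, g b (a b)) + ∑ b, π b * (γ * V b - m b) := by
    intro a
    have herase : ∀ b : Fin n, (∑ i ∈ Finset.univ.erase b, r i * a i)
        = (∑ i, r i * a i) - r b * a b := fun b =>
      Finset.sum_erase_eq_sub (Finset.mem_univ b)
    simp only [herase]
    set S := ∑ i, r i * a i with hS
    calc ∑ b, π b * (C (a b) - (S - r b * a b) - m b + γ * V b)
        = (∑ b, ((g b (a b) + π b * (γ * V b - m b)) + r b * a b)) - (∑ b, π b) * S := by
          rw [Finset.sum_mul, ← Finset.sum_sub_distrib]
          exact Finset.sum_congr rfl fun b _ => by simp only [hg]; ring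
      _ = (∑ b, g b (a b)) + ∑ b, π b * (γ * V b - m b) := by
          rw [hsum1, one_mul, Finset.sum_add_distrib, Finset.sum_add_distrib, ← hS]
          ring
  constructor
  · intro hmin b
    intro x hx
    have hxset : Function.update a' b x ∈ {a : Fin n → ℝ | ∀ b, a b ∈ Set.Icc (0:ℝ) 1} := by
      intro i
      rcases eq_or_ne i b with rfl | hib
      · simpa using hx
      · simpa [Function.update_of_ne hib] using ha' i
    have h := hmin hxset
    simp only [Set.mem_setOf_eq, key] at h
    -- reduce to per-coordinate inequality
    have hsplit : ∀ f : Fin n → ℝ, (∑ i, f i) = f b + ∑ i ∈ Finset.univ.erase b, f i :=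
      fun f => (Finset.add_sum_erase _ f (Finset.mem_univ b)).symm
    rw [hsplit (fun i => g i (a' i)), hsplit (fun i => g i (Function.update a' b x i))] at h
    have heq : ∑ i ∈ Finset.univ.erase b, g i (Function.update a' b x i)
        = ∑ i ∈ Finset.univ.erase b, g i (a' i) := by
      refine Finset.sum_congr rfl fun i hi => ?_
      rw [Function.update_of_ne (Finset.ne_of_mem_erase hi)]
    rw [heq, Function.update_self] at h
    have hgb : g b (a' b) ≤ g b x := by linarith
    simp only [hg] at hgb
    simp only [Set.mem_setOf_eq]
    linarith
  · intro h
    intro a ha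
    simp only [Set.mem_setOf_eq, key]
    have : ∑ b, g b (a' b) ≤ ∑ b, g b (a b) := by
      refine Finset.sum_le_sum fun b _ => ?_
      have hb := h b (ha b)
      simp only [hg]
      simp only [Set.mem_setOf_eq] at hb
      linarith
    linarith
end

section
/- Let C(a) = c·a with c > 0, and for b = 1,…,n let r_b > 0, m_b ≥ 0, V_b ≤ 0, γ ∈ [0,1). Then for π ∈ Δ([n]), G(π) = Σ_{b=1}^n [ (π_b(c + r_b) - r_b)·𝟙(π_b ≤ r_b/(c + r_b)) + π_b(γV_b - m_b) ]. -/
theorem stmt_15 (n : ℕ) (hn : 1 ≤ n) (c : ℝ) (hc : 0 < c)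
    (r : Fin n → ℝ) (hr : ∀ b, 0 < r b)
    (m : Fin n → ℝ) (hm : ∀ b, 0 ≤ m b)
    (V : Fin n → ℝ) (hV : ∀ b, V b ≤ 0)
    (γ : ℝ) (hγ : γ ∈ Set.Ico (0:ℝ) 1)
    (π : Fin n → ℝ) (hπ : π ∈ stdSimplex ℝ (Fin n)) :
    (⨅ a : Fin n → Set.Icc (0:ℝ) 1, ∑ b, π b *
        (c * (a b : ℝ) - (∑ i ∈ Finset.univ.erase b, r i * (a i : ℝ)) - m b + γ * V b)) =
    ∑ b, ((π b * (c + r b) - r b) * (if π b ≤ r b / (c + r b) then (1:ℝ) else 0)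
          + π b * (γ * V b - m b)) := by
  have hsum : ∑ b, π b = 1 := hπ.2
  set k : Fin n → ℝ := fun b => π b * (c + r b) - r b with hk
  set K : ℝ := ∑ b, π b * (γ * V b - m b) with hKdef
  -- rewrite the objective as a separable linear function
  have key : ∀ a : Fin n → Set.Icc (0:ℝ) 1,
      (∑ b, π b * (c * (a b : ℝ) - (∑ i ∈ Finset.univ.erase b, r i * (a i : ℝ))
        - m b + γ * V b)) = (∑ b, k b * (a b : ℝ)) + K := by
    intro a
    set S : ℝ := ∑ i, r i * (a i : ℝ) with hS
    have he : ∀ b : Fin n, (∑ i ∈ Finset.univ.erase b, r i * (a i : ℝ))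
        = S - r b * (a b : ℝ) := fun b =>
      Finset.sum_erase_eq_sub (Finset.mem_univ b)
    calc (∑ b, π b * (c * (a b : ℝ) - (∑ i ∈ Finset.univ.erase b, r i * (a i : ℝ))
            - m b + γ * V b))
        = (∑ b, (π b * (c * (a b:ℝ) + r b * (a b:ℝ) + (γ * V b - m b)) - π b * S)) := by
          apply Finset.sum_congr rfl
          intro b _
          rw [he b]; ring
      _ = (∑ b, π b * (c * (a b:ℝ) + r b * (a b:ℝ) + (γ * V b - m b))) - (∑ b, π b) * S := by
          rw [Finset.sum_sub_distrib, Finset.sum_mul]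
      _ = (∑ b, π b * (c * (a b:ℝ) + r b * (a b:ℝ) + (γ * V b - m b))) - ∑ b, r b * (a b:ℝ) := by
          rw [hsum, one_mul, hS]
      _ = ∑ b, (k b * (a b:ℝ) + π b * (γ * V b - m b)) := by
          rw [← Finset.sum_sub_distrib]
          apply Finset.sum_congr rfl
          intro b _
          simp only [hk]; ring
      _ = (∑ b, k b * (a b : ℝ)) + K := by
          rw [Finset.sum_add_distrib]
  -- the RHS equals ∑ min (k b) 0 + K
  have hrhs : (∑ b, ((π b * (c + r b) - r b) * (if π b ≤ r b / (c + r b) then (1:ℝ) else 0)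
          + π b * (γ * V b - m b))) = (∑ b, min (k b) 0) + K := by
    rw [← Finset.sum_add_distrib]
    apply Finset.sum_congr rfl
    intro b _
    have hcr : (0:ℝ) < c + r b := by linarith [hr b]
    have hiff : π b ≤ r b / (c + r b) ↔ k b ≤ 0 := by
      rw [le_div_iff₀ hcr, hk]; constructor <;> intro h <;> simp at * <;> linarith
    by_cases h : π b ≤ r b / (c + r b)
    · rw [if_pos h, min_eq_left (hiff.mp h), mul_one]
    · rw [if_neg h, min_eq_right, mul_zero]
      have := hiff.not.mp h
      push_neg at this
      linarith
  rw [hrhs]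
  -- pointwise lower bound
  have hlb : ∀ a : Fin n → Set.Icc (0:ℝ) 1,
      (∑ b, min (k b) 0) + K ≤ (∑ b, π b * (c * (a b : ℝ)
        - (∑ i ∈ Finset.univ.erase b, r i * (a i : ℝ)) - m b + γ * V b)) := by
    intro a
    rw [key a]
    have : ∀ b ∈ Finset.univ, min (k b) 0 ≤ k b * (a b : ℝ) := by
      intro b _
      obtain ⟨h0, h1⟩ := (a b).2
      rcases le_or_gt (k b) 0 with h | h
      · rw [min_eq_left h]; nlinarith
      · rw [min_eq_right h.le]; positivity
    linarith [Finset.sum_le_sum this]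
  apply le_antisymm
  · -- infimum ≤ value at optimal a*
    set astar : Fin n → Set.Icc (0:ℝ) 1 := fun b =>
      if k b ≤ 0 then ⟨1, by norm_num⟩ else ⟨0, by norm_num⟩ with hastar
    have hval : (∑ b, π b * (c * (astar b : ℝ)
        - (∑ i ∈ Finset.univ.erase b, r i * (astar i : ℝ)) - m b + γ * V b))
        = (∑ b, min (k b) 0) + K := by
      rw [key astar]
      congr 1
      apply Finset.sum_congr rfl
      intro b _
      rcases le_or_gt (k b) 0 with h | h
      · simp [hastar, h, min_eq_left h]
      · simp [hastar, not_le.mpr h, min_eq_right h.le]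
    calc (⨅ a : Fin n → Set.Icc (0:ℝ) 1, ∑ b, π b *
          (c * (a b : ℝ) - (∑ i ∈ Finset.univ.erase b, r i * (a i : ℝ)) - m b + γ * V b))
        ≤ _ := ciInf_le ⟨(∑ b, min (k b) 0) + K, by
            rintro x ⟨a, rfl⟩; exact hlb a⟩ astar
      _ = (∑ b, min (k b) 0) + K := hval
  · exact le_ciInf hlb
end
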